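/- arXiv:math/0005233 — 5 statements merged into one kernel-verified Lean document; each statement's English description precedes it below -/
import Mathlib

section
/- Let E and F be staircases and suppose there exists a system of arrows S on E with S(E) = F. Then S_E(k) ≥ S_F(k) for every k, where S_E(k) is the number of elements of E among the k+1 smallest monomials. -/
open Set

/-- A staircase: a subset of ℕ² whose complement is closed under addition of ℕ². -/
def IsStaircase (E : Set (ℕ × ℕ)) : Prop :=
  ∀ p : ℕ × ℕ, p ∉ E → ∀ q : ℕ × ℕ, p + q ∉ E

/-- The degree d(x^α y^β) = -b·α + a·β. -/
def dDeg (a b : ℤ) (p : ℕ × ℕ) : ℤ := -b * p.1 + a * p.2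

/-- The monomial order: smaller degree, or equal degree and smaller y-exponent. -/
def mLt (a b : ℤ) (p q : ℕ × ℕ) : Prop :=
  dDeg a b p < dDeg a b q ∨ (dDeg a b p = dDeg a b q ∧ p.2 < q.2)

def mLe (a b : ℤ) (p q : ℕ × ℕ) : Prop := mLt a b p q ∨ p = q

/-- An arrow on a staircase `E`: origin `P ∈ E`, and `Q - P` a nonpositive multiple of `(a,b)`. -/
def IsArrow (a b : ℤ) (E : Set (ℕ × ℕ)) (P Q : ℕ × ℕ) : Prop :=
  P ∈ E ∧ ∃ l : ℤ, l ≤ 0 ∧ (Q.1 : ℤ) - P.1 = l * a ∧ (Q.2 : ℤ) - P.2 = l * b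

/-- `(P,Q)` is shorter than `(P',Q')`: |λ| ≤ |λ'| (equivalently, since a > 0,
comparison of the absolute values of the x-displacements). -/
def Shorter (P Q P' Q' : ℕ × ℕ) : Prop :=
  |(Q.1 : ℤ) - P.1| ≤ |(Q'.1 : ℤ) - P'.1|

/-- A system of arrows on a staircase `E`, encoded by the map `f` sending each origin to
the end of its arrow: each `p ∈ E` carries an arrow `(p, f p)`, ends are pairwise distinct,
and the system is compatible with division. -/
def IsArrowSystem (a b : ℤ) (E : Set (ℕ × ℕ)) (f : ℕ × ℕ → ℕ × ℕ) : Prop :=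
  (∀ p ∈ E, IsArrow a b E p (f p)) ∧
  (∀ p ∈ E, ∀ q ∈ E, p ≠ q → f p ≠ f q) ∧
  (∀ p ∈ E, ∀ Q' : ℕ × ℕ, Q'.1 ≤ (f p).1 → Q'.2 ≤ (f p).2 →
    ∃ g ∈ E, f g = Q' ∧ Shorter g Q' p (f p))

/-- An arrow on the complement `Eᶜ`: origin `P ∉ E`, and `Q - P` a nonnegative multiple
of `(a,b)`. -/
def IsCArrow (a b : ℤ) (E : Set (ℕ × ℕ)) (P Q : ℕ × ℕ) : Prop :=
  P ∉ E ∧ ∃ l : ℤ, 0 ≤ l ∧ (Q.1 : ℤ) - P.1 = l * a ∧ (Q.2 : ℤ) - P.2 = l * b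

/-- A system of arrows on the complement `Eᶜ` of a staircase: each `p ∉ E` carries an
arrow `(p, f p)`, ends are pairwise distinct, and the system is compatible with
multiplication. -/
def IsCArrowSystem (a b : ℤ) (E : Set (ℕ × ℕ)) (f : ℕ × ℕ → ℕ × ℕ) : Prop :=
  (∀ p ∉ E, IsCArrow a b E p (f p)) ∧
  (∀ p ∉ E, ∀ q ∉ E, p ≠ q → f p ≠ f q) ∧
  (∀ p ∉ E, ∀ m : ℕ × ℕ, ∃ g ∉ E, f g = f p + m ∧ Shorter g (f p + m) p (f p))

/-- The box B_{M×N}. -/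
def Box (M N : ℕ) : Set (ℕ × ℕ) := {p | p.1 < M ∧ p.2 < N}

/-- The dual of a staircase `E ⊆ B_{M×N}` inside the box. -/
def dualStaircase (E : Set (ℕ × ℕ)) (M N : ℕ) : Set (ℕ × ℕ) :=
  {p ∈ Box M N | (M - 1 - p.1, N - 1 - p.2) ∉ E}

/-- `SEcount a b E m` = number of elements of `E` that are ≤ the monomial `m`. -/
noncomputable def SEcount (a b : ℤ) (E : Set (ℕ × ℕ)) (m : ℕ × ℕ) : ℕ :=
  {p ∈ E | mLe a b p m}.ncard

lemma staircase_lower {E : Set (ℕ × ℕ)} (hE : IsStaircase E) {p : ℕ × ℕ} (hp : p ∈ E)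
    {q : ℕ × ℕ} (h1 : q.1 ≤ p.1) (h2 : q.2 ≤ p.2) : q ∈ E := by
  by_contra hq
  have h := hE q hq (p.1 - q.1, p.2 - q.2)
  have heq : q + (p.1 - q.1, p.2 - q.2) = p := by
    ext <;> simp [Prod.fst_add, Prod.snd_add] <;> omega
  rw [heq] at h
  exact h hp

lemma mLe_of_deg_eq {a b : ℤ} (hb : b ≠ 0) {p q : ℕ × ℕ}
    (hd : dDeg a b p = dDeg a b q) (hy : p.2 ≤ q.2) : mLe a b p q := by
  rcases lt_or_eq_of_le hy with h | h
  · exact Or.inl (Or.inr ⟨hd, h⟩)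
  · refine Or.inr ?_
    have h1 : (p.1 : ℤ) = q.1 := by
      unfold dDeg at hd
      have hb' : -b * (p.1 : ℤ) = -b * q.1 := by rw [h] at hd; linarith
      exact mul_left_cancel₀ (neg_ne_zero.mpr hb) hb'
    have : p.1 = q.1 := by exact_mod_cast h1
    exact Prod.ext this h

lemma mLe_trans {a b : ℤ} {p q r : ℕ × ℕ} (h1 : mLe a b p q) (h2 : mLe a b q r) :
    mLe a b p r := by
  rcases h1 with h1 | rfl
  · rcases h2 with h2 | rfl
    · left
      rcases h1 with h1 | ⟨h1, h1'⟩ <;> rcases h2 with h2 | ⟨h2, h2'⟩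
      · exact Or.inl (h1.trans h2)
      · exact Or.inl (h2 ▸ h1)
      · exact Or.inl (h1 ▸ h2)
      · exact Or.inr ⟨h1.trans h2, h1'.trans h2'⟩
    · exact Or.inl h1
  · exact h2

lemma mLe_deg_le {a b : ℤ} {p q : ℕ × ℕ} (h : mLe a b p q) : dDeg a b p ≤ dDeg a b q := by
  rcases h with (h | ⟨h, _⟩) | rfl
  · exact le_of_lt h
  · exact le_of_eq h
  · exact le_rfl

/-- if there is a system of arrows from E to F then S_E ≥ S_F pointwise. -/
theorem stmt_6 (a b : ℤ) (ha : 0 < a) (hb : b ≠ 0) (hab : IsCoprime a b)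
    (E F : Set (ℕ × ℕ)) (hE : IsStaircase E) (hF : IsStaircase F)
    (f : ℕ × ℕ → ℕ × ℕ) (hf : IsArrowSystem a b E f) (himg : f '' E = F) :
    ∀ m : ℕ × ℕ, SEcount a b F m ≤ SEcount a b E m := by
  obtain ⟨harr, hinj, hdiv⟩ := hf
  intro m
  unfold SEcount
  set D := dDeg a b m with hD
  -- degree is preserved by arrows
  have hdeg : ∀ p ∈ E, dDeg a b (f p) = dDeg a b p := by
    intro p hp
    obtain ⟨-, l, hl, h1, h2⟩ := harr p hp
    unfold dDeg
    linear_combination (-b) * h1 + a * h2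
  rcases hb.lt_or_gt with hbneg | hbpos
  · -- b < 0 : count sets are finite; inject F-set into E-set via preimages
    have hfinE : {p ∈ E | mLe a b p m}.Finite := by
      apply Set.Finite.subset (Set.finite_Icc ((0,0) : ℕ × ℕ) (D.toNat, D.toNat))
      rintro p ⟨-, hpm⟩
      have hdp : dDeg a b p ≤ D := mLe_deg_le hpm
      unfold dDeg at hdp
      have h1 : (p.1 : ℤ) ≤ D := by nlinarith [Int.ofNat_nonneg p.1, Int.ofNat_nonneg p.2]
      have h2 : (p.2 : ℤ) ≤ D := by nlinarith [Int.ofNat_nonneg p.1, Int.ofNat_nonneg p.2]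
      simp only [Set.mem_Icc, Prod.le_def]
      omega
    have hgetE : ∀ q ∈ {p ∈ F | mLe a b p m}, Function.invFunOn f E q ∈ E ∧
        f (Function.invFunOn f E q) = q := by
      rintro q ⟨hqF, -⟩
      rw [← himg] at hqF
      obtain ⟨p, hp, hfp⟩ := hqF
      exact ⟨Function.invFunOn_mem ⟨p, hp, hfp⟩, Function.invFunOn_eq ⟨p, hp, hfp⟩⟩
    have hmap : ∀ q ∈ {p ∈ F | mLe a b p m},
        Function.invFunOn f E q ∈ {p ∈ E | mLe a b p m} := by
      rintro q hq
      obtain ⟨hgE, hgq⟩ := hgetE q hq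
      refine ⟨hgE, ?_⟩
      obtain ⟨-, l, hl, h1, h2⟩ := harr _ hgE
      rw [hgq] at h1 h2
      have hy : (Function.invFunOn f E q).2 ≤ q.2 := by
        have : 0 ≤ l * b := by nlinarith
        omega
      have hdq : dDeg a b (Function.invFunOn f E q) = dDeg a b q := by
        have h := hdeg _ hgE; rw [hgq] at h; exact h.symm ▸ rfl
      exact mLe_trans (mLe_of_deg_eq hb hdq hy) hq.2
    have hinj' : Set.InjOn (Function.invFunOn f E) {p ∈ F | mLe a b p m} := by
      intro q1 h1 q2 h2 heq
      have e1 := (hgetE q1 h1).2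
      have e2 := (hgetE q2 h2).2
      rw [← e1, ← e2, heq]
    exact Set.ncard_le_ncard_of_injOn _ hmap hinj' hfinE
  · -- b > 0 : F-set ⊆ E-set
    have hsub : {p ∈ F | mLe a b p m} ⊆ {p ∈ E | mLe a b p m} := by
      rintro q ⟨hqF, hqm⟩
      rw [← himg] at hqF
      obtain ⟨p, hp, hfp⟩ := hqF
      obtain ⟨-, l, hl, h1, h2⟩ := harr p hp
      rw [hfp] at h1 h2
      have hla : l * a ≤ 0 := mul_nonpos_of_nonpos_of_nonneg hl (le_of_lt ha)
      have hlb : l * b ≤ 0 := mul_nonpos_of_nonpos_of_nonneg hl (le_of_lt hbpos)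
      exact ⟨staircase_lower hE hp (by omega) (by omega), hqm⟩
    by_cases hfin : {p ∈ E | mLe a b p m}.Finite
    · exact Set.ncard_le_ncard hsub hfin
    · -- infinite case: both sets are infinite, both ncards are 0
      have hunb : ∀ n : ℕ, ∃ p ∈ {p ∈ E | mLe a b p m}, n ≤ p.1 := by
        intro n
        by_contra h
        push_neg at h
        apply hfin
        apply Set.Finite.subset (Set.finite_Icc ((0,0) : ℕ × ℕ) (n, (D + b * n).toNat))
        rintro p hp
        have hx : p.1 < n := h p hp
        have hdp : dDeg a b p ≤ D := mLe_deg_le hp.2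
        unfold dDeg at hdp
        have hbx : b * (p.1 : ℤ) ≤ b * n := by
          apply mul_le_mul_of_nonneg_left _ (le_of_lt hbpos)
          exact_mod_cast le_of_lt hx
        have h2 : a * (p.2 : ℤ) ≤ D + b * n := by linarith
        have h2' : (p.2 : ℤ) ≤ D + b * n := by nlinarith [Int.ofNat_nonneg p.2]
        simp only [Set.mem_Icc, Prod.le_def]
        omega
      have haxis : ∀ α : ℕ, (α, 0) ∈ E := by
        intro α
        obtain ⟨p, hp, hle⟩ := hunb α
        exact staircase_lower hE hp.1 hle (Nat.zero_le _)
      have hfix : ∀ α : ℕ, f (α, 0) = (α, 0) := by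
        intro α
        obtain ⟨-, l, hl, h1, h2⟩ := harr (α, 0) (haxis α)
        have hlb : l * b ≤ 0 := mul_nonpos_of_nonpos_of_nonneg hl (le_of_lt hbpos)
        have hl0 : l * b = 0 := by omega
        have : l = 0 := by
          rcases mul_eq_zero.mp hl0 with h | h
          · exact h
          · exact absurd h hb
        rw [this] at h1 h2
        ext <;> simp at h1 h2 ⊢ <;> omega
      have hmemF : ∀ α : ℕ, D.natAbs + 1 ≤ α → (α, 0) ∈ {p ∈ F | mLe a b p m} := by
        intro α hα
        refine ⟨by rw [← himg]; exact ⟨(α, 0), haxis α, hfix α⟩, Or.inl (Or.inl ?_)⟩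
        show dDeg a b (α, 0) < D
        unfold dDeg
        simp only [Nat.cast_zero, mul_zero, add_zero]
        have h1 : (D.natAbs : ℤ) + 1 ≤ (α : ℤ) := by exact_mod_cast hα
        have h2 : -(D.natAbs : ℤ) ≤ D := by omega
        nlinarith
      have hinfF : {p ∈ F | mLe a b p m}.Infinite := by
        refine Set.infinite_of_injective_forall_mem
          (f := fun n : ℕ => ((n + (D.natAbs + 1), 0) : ℕ × ℕ)) ?_ ?_
        · intro n1 n2 h
          simpa [Prod.ext_iff] using h
        · intro n
          exact hmemF _ (by omega)
      rw [Set.Infinite.ncard hinfF, Set.Infinite.ncard hfin]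
end

section
/- With (a,b) = (1,−1), let E and F be the staircases with monomial ideals I^E = (y⁴, x³y³, x⁴y, x⁵) and I^F = (y⁵, x²y³, x⁴). Then there is no system of arrows S on E with S(E) = F. -/
open Set

/-- The staircase of the monomial ideal (y⁴, x³y³, x⁴y, x⁵). -/
def E8 : Set (ℕ × ℕ) :=
  {p | ¬ (4 ≤ p.2 ∨ (3 ≤ p.1 ∧ 3 ≤ p.2) ∨ (4 ≤ p.1 ∧ 1 ≤ p.2) ∨ 5 ≤ p.1)}

/-- The staircase of the monomial ideal (y⁵, x²y³, x⁴). -/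
def F8 : Set (ℕ × ℕ) :=
  {p | ¬ (5 ≤ p.2 ∨ (2 ≤ p.1 ∧ 3 ≤ p.2) ∨ 4 ≤ p.1)}


lemma arrowFacts {E : Set (ℕ × ℕ)} {P Q : ℕ × ℕ} (h : IsArrow 1 (-1) E P Q) :
    Q.1 ≤ P.1 ∧ P.2 ≤ Q.2 ∧ Q.1 + Q.2 = P.1 + P.2 := by
  obtain ⟨-, l, hl, h1, h2⟩ := h
  rw [mul_one] at h1
  rw [mul_neg_one] at h2
  omega

/-- with (a,b) = (1,−1), there is no system of arrows S on E with S(E) = F. -/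
theorem stmt_8 : ¬ ∃ f : ℕ × ℕ → ℕ × ℕ, IsArrowSystem 1 (-1) E8 f ∧ f '' E8 = F8 := by
  rintro ⟨f, ⟨harr, hinj, hdiv⟩, himg⟩
  have hF : ∀ p ∈ E8, f p ∈ F8 := fun p hp => himg ▸ Set.mem_image_of_mem f hp
  have hE23 : ((2,3) : ℕ × ℕ) ∈ E8 := by simp [E8]
  have hE32 : ((3,2) : ℕ × ℕ) ∈ E8 := by simp [E8]
  -- f (2,3) = (1,4)
  have h23 : f (2,3) = (1,4) := by
    obtain ⟨h1, h2, h3⟩ := arrowFacts (harr _ hE23)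
    have hm := hF _ hE23
    simp only [F8, Set.mem_setOf_eq] at hm
    have : (f (2,3)).1 = 1 ∧ (f (2,3)).2 = 4 := by omega
    exact Prod.ext_iff.mpr this
  -- f (3,2) = (3,2)
  have h32 : f (3,2) = (3,2) := by
    obtain ⟨h1, h2, h3⟩ := arrowFacts (harr _ hE32)
    have hm := hF _ hE32
    simp only [F8, Set.mem_setOf_eq] at hm
    have hne : f (3,2) ≠ (1,4) := h23 ▸ hinj _ hE32 _ hE23 (by simp)
    rw [Ne, Prod.ext_iff, not_and_or] at hne
    have : (f (3,2)).1 = 3 ∧ (f (3,2)).2 = 2 := by omega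
    exact Prod.ext_iff.mpr this
  -- divisor (2,2) of f (3,2) : forces f (2,2) = (2,2)
  have h22 : f (2,2) = (2,2) := by
    obtain ⟨g, hgE, hgf, hgs⟩ := hdiv (3,2) hE32 (2,2) (by simp [h32]) (by simp [h32])
    have hgs' : |(2 : ℤ) - g.1| ≤ 0 := by simpa [Shorter, h32] using hgs
    rw [abs_nonpos_iff] at hgs'
    obtain ⟨h1, h2, h3⟩ := arrowFacts (harr _ hgE)
    rw [hgf] at h1 h2 h3
    have hg : g = (2,2) := Prod.ext_iff.mpr (by omega)
    rw [hg] at hgf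
    exact hgf
  -- divisor (0,4) of f (2,3) = (1,4) : forces f (1,3) = (0,4)
  have h13 : f (1,3) = (0,4) := by
    obtain ⟨g, hgE, hgf, hgs⟩ := hdiv (2,3) hE23 (0,4) (by simp [h23]) (by simp [h23])
    have hgs' : |(0 : ℤ) - g.1| ≤ 1 := by simpa [Shorter, h23] using hgs
    rw [abs_le] at hgs'
    obtain ⟨h1, h2, h3⟩ := arrowFacts (harr _ hgE)
    rw [hgf] at h1 h2 h3
    simp only [E8, Set.mem_setOf_eq] at hgE
    have hg : g = (1,3) := Prod.ext_iff.mpr (by omega)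
    rw [hg] at hgf
    exact hgf
  -- divisor (1,3) of f (2,3) = (1,4) : no candidate left
  obtain ⟨g, hgE, hgf, hgs⟩ := hdiv (2,3) hE23 (1,3) (by simp [h23]) (by simp [h23])
  have hgs' : |(1 : ℤ) - g.1| ≤ 1 := by simpa [Shorter, h23] using hgs
  rw [abs_le] at hgs'
  obtain ⟨h1, h2, h3⟩ := arrowFacts (harr _ hgE)
  rw [hgf] at h1 h2 h3
  simp only [E8, Set.mem_setOf_eq] at hgE
  have hcase : (g.1 = 2 ∧ g.2 = 2) ∨ (g.1 = 1 ∧ g.2 = 3) := by omega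
  rcases hcase with hc | hc
  · have hg : g = (2,2) := Prod.ext_iff.mpr hc
    rw [hg, h22] at hgf
    simp at hgf
  · have hg : g = (1,3) := Prod.ext_iff.mpr hc
    rw [hg, h13] at hgf
    simp at hgf
end

section
/- Let E(p₁,…,pₙ) and E(q₁,…,qₙ) be the staircases associated to nonincreasing sequences p₁ ≥ ⋯ ≥ pₙ ≥ 0 and q₁ ≥ ⋯ ≥ qₙ ≥ 0 with p₁, q₁ ≤ k+1−n (with a = 1, b = −1). Then there exists a system of arrows S on E(p₁,…,pₙ) with S(E(p₁,…,pₙ)) = E(q₁,…,qₙ) if and only if qᵢ ≥ pᵢ for all i. -/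
open Set

/-- The monomial x^{n−i+pᵢ} y^{k−n+i−pᵢ}, for i = i.val + 1 ∈ {1,…,n}. -/
def exPt (k n : ℕ) (p : Fin n → ℕ) (i : Fin n) : ℕ × ℕ :=
  (n - 1 - i.val + p i, k + i.val + 1 - n - p i)

/-- The staircase E(p₁,…,pₙ): all monomials of total degree ≤ k−1 together with the
monomials of total degree k not of the form x^{n−i+pᵢ} y^{k−n+i−pᵢ}. -/
def Epart (k n : ℕ) (p : Fin n → ℕ) : Set (ℕ × ℕ) :=
  {m | m.1 + m.2 < k} ∪ {m | m.1 + m.2 = k ∧ ∀ i : Fin n, m ≠ exPt k n p i}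

open Finset

def xSeq (n : ℕ) (p : Fin n → ℕ) (i : Fin n) : ℕ := n - 1 - i.val + p i

def Xset (n : ℕ) (p : Fin n → ℕ) : Finset ℕ := Finset.image (xSeq n p) Finset.univ

def Aset (k n : ℕ) (p : Fin n → ℕ) : Finset ℕ := Finset.range (k+1) \ Xset n p

section basic

variable {k n : ℕ} {p : Fin n → ℕ}

lemma xSeq_strictAnti (hp : ∀ i j : Fin n, i ≤ j → p j ≤ p i) :
    StrictAnti (xSeq n p) := by
  intro i j hij
  have h1 : p j ≤ p i := hp i j hij.le
  have h2 : i.val < j.val := hij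
  have h3 : j.val < n := j.isLt
  unfold xSeq
  omega

lemma xSeq_injective (hp : ∀ i j : Fin n, i ≤ j → p j ≤ p i) :
    Function.Injective (xSeq n p) := (xSeq_strictAnti hp).injective

lemma xSeq_le (hnk : n ≤ k + 1) (hp1 : ∀ i, p i ≤ k + 1 - n) (i : Fin n) :
    xSeq n p i ≤ k := by
  have h1 : p i ≤ k + 1 - n := hp1 i
  have h3 : i.val < n := i.isLt
  unfold xSeq
  omega

lemma Xset_subset (hnk : n ≤ k + 1) (hp1 : ∀ i, p i ≤ k + 1 - n) :
    Xset n p ⊆ Finset.range (k+1) := by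
  intro x hx
  simp only [Xset, Finset.mem_image, Finset.mem_univ, true_and] at hx
  obtain ⟨i, rfl⟩ := hx
  simpa [Nat.lt_succ_iff] using xSeq_le hnk hp1 i

lemma card_Xset (hp : ∀ i j : Fin n, i ≤ j → p j ≤ p i) : (Xset n p).card = n := by
  rw [Xset, Finset.card_image_of_injective _ (xSeq_injective hp), card_univ, Fintype.card_fin]

lemma card_Aset (hnk : n ≤ k + 1) (hp : ∀ i j : Fin n, i ≤ j → p j ≤ p i)
    (hp1 : ∀ i, p i ≤ k + 1 - n) : (Aset k n p).card = k + 1 - n := by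
  rw [Aset, Finset.card_sdiff_of_subset (Xset_subset hnk hp1), card_Xset hp, Finset.card_range]

lemma exPt_eq (hnk : n ≤ k + 1) (hp1 : ∀ i, p i ≤ k + 1 - n) (i : Fin n) :
    exPt k n p i = (xSeq n p i, k - xSeq n p i) := by
  have h1 : p i ≤ k + 1 - n := hp1 i
  have h3 : i.val < n := i.isLt
  unfold exPt xSeq
  refine Prod.ext rfl ?_
  simp only
  omega

lemma mem_Epart_iff (hnk : n ≤ k + 1) (hp1 : ∀ i, p i ≤ k + 1 - n) (m : ℕ × ℕ) :
    m ∈ Epart k n p ↔ m.1 + m.2 < k ∨ (m.1 + m.2 = k ∧ m.1 ∈ Aset k n p) := by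
  have key : m.1 + m.2 = k → ((∀ i, m ≠ exPt k n p i) ↔ m.1 ∈ Aset k n p) := by
    intro hdeg
    have heq : ∀ i, m = exPt k n p i ↔ m.1 = xSeq n p i := by
      intro i
      rw [exPt_eq hnk hp1 i, Prod.ext_iff]
      have := xSeq_le hnk hp1 i
      constructor
      · exact fun h => h.1
      · intro h; exact ⟨h, by omega⟩
    simp only [Aset, Finset.mem_sdiff, Finset.mem_range, Xset, Finset.mem_image,
      Finset.mem_univ, true_and]
    constructor
    · intro h
      refine ⟨by omega, ?_⟩
      rintro ⟨i, hi⟩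
      exact h i ((heq i).2 hi.symm)
    · intro ⟨_, h⟩ i hi
      exact h ⟨i, ((heq i).1 hi).symm⟩
  simp only [Epart, Set.mem_union, Set.mem_setOf_eq]
  constructor
  · rintro (h | ⟨hdeg, h⟩)
    · exact Or.inl h
    · exact Or.inr ⟨hdeg, (key hdeg).1 h⟩
  · rintro (h | ⟨hdeg, h⟩)
    · exact Or.inl h
    · exact Or.inr ⟨hdeg, (key hdeg).2 h⟩

lemma Xset_filter_card (hp : ∀ i j : Fin n, i ≤ j → p j ≤ p i) (P : ℕ → Prop) [DecidablePred P] :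
    ((Xset n p).filter P).card = (Finset.univ.filter fun i => P (xSeq n p i)).card := by
  rw [Xset, Finset.filter_image, Finset.card_image_of_injective _ (xSeq_injective hp)]

lemma Aset_filter_card (hnk : n ≤ k + 1) (hp1 : ∀ i, p i ≤ k + 1 - n)
    (P : ℕ → Prop) [DecidablePred P] :
    ((Aset k n p).filter P).card + ((Xset n p).filter P).card
      = ((Finset.range (k+1)).filter P).card := by
  have h1 : (Aset k n p).filter P = ((Finset.range (k+1)).filter P) \ ((Xset n p).filter P) := by
    ext x
    simp only [Aset, Finset.mem_filter, Finset.mem_sdiff]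
    tauto
  rw [h1, Finset.card_sdiff_add_card_eq_card]
  exact Finset.filter_subset_filter _ (Xset_subset hnk hp1)

end basic

section nth

variable {N : ℕ}

lemma nth_le (f g : Fin N → ℕ) (hf : StrictMono f) (hg : StrictMono g)
    (h : ∀ t, (Finset.univ.filter fun j => f j ≤ t).card
        ≤ (Finset.univ.filter fun j => g j ≤ t).card) :
    ∀ j, g j ≤ f j := by
  intro j
  by_contra hlt
  push_neg at hlt
  have h1 : (Finset.univ.filter fun j' => f j' ≤ f j) = Finset.Iic j := by
    ext j'; simp [hf.le_iff_le, Finset.mem_Iic]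
  have h2 : (Finset.univ.filter fun j' => g j' ≤ f j) ⊆ Finset.Iio j := by
    intro j' hj'
    simp only [Finset.mem_filter, Finset.mem_univ, true_and] at hj'
    simp only [Finset.mem_Iio, ← hg.lt_iff_lt]
    omega
  have := h (f j)
  rw [h1, Fin.card_Iic] at this
  have := Finset.card_le_card h2
  rw [Fin.card_Iio] at this
  omega

lemma nth_ge (f g : Fin N → ℕ) (hf : StrictAnti f) (hg : StrictAnti g)
    (h : ∀ t, (Finset.univ.filter fun j => t ≤ f j).card
        ≤ (Finset.univ.filter fun j => t ≤ g j).card) :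
    ∀ j, f j ≤ g j := by
  intro j
  by_contra hlt
  push_neg at hlt
  have h1 : (Finset.univ.filter fun j' => f j ≤ f j') = Finset.Iic j := by
    ext j'; simp [hf.le_iff_ge, Finset.mem_Iic]
  have h2 : (Finset.univ.filter fun j' => f j ≤ g j') ⊆ Finset.Iio j := by
    intro j' hj'
    simp only [Finset.mem_filter, Finset.mem_univ, true_and] at hj'
    simp only [Finset.mem_Iio, ← hg.lt_iff_gt]
    omega
  have := h (f j)
  rw [h1, Fin.card_Iic] at this
  have := Finset.card_le_card h2
  rw [Fin.card_Iio] at this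
  omega

end nth

lemma orderIso_filter_card (s : Finset ℕ) {m : ℕ} (h : s.card = m)
    (P : ℕ → Prop) [DecidablePred P] :
    (Finset.univ.filter fun j : Fin m => P (s.orderIsoOfFin h j : ℕ)).card
      = (s.filter P).card := by
  apply Finset.card_bij (fun j _ => (s.orderIsoOfFin h j : ℕ))
  · intro j hj
    simp only [Finset.mem_filter, Finset.mem_univ, true_and] at hj ⊢
    exact ⟨(s.orderIsoOfFin h j).2, hj⟩
  · intro j _ j' _ hjj'
    exact (s.orderIsoOfFin h).injective (Subtype.ext hjj')
  · intro y hy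
    simp only [Finset.mem_filter] at hy
    refine ⟨(s.orderIsoOfFin h).symm ⟨y, hy.1⟩, ?_, ?_⟩
    · have hv : ((s.orderIsoOfFin h) ((s.orderIsoOfFin h).symm ⟨y, hy.1⟩) : ℕ) = y := by
        rw [(s.orderIsoOfFin h).apply_symm_apply]
      simp only [Finset.mem_filter, Finset.mem_univ, true_and, hv]
      exact hy.2
    · rw [(s.orderIsoOfFin h).apply_symm_apply]

lemma Aset_le {k n : ℕ} {p : Fin n → ℕ} {x : ℕ} (hx : x ∈ Aset k n p) : x ≤ k := by
  have := (Finset.mem_sdiff.1 hx).1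
  rw [Finset.mem_range] at this
  omega

lemma orderIso_filter_card_le (s : Finset ℕ) {m : ℕ} (h : s.card = m) (t : ℕ) :
    (Finset.univ.filter fun j : Fin m => (s.orderIsoOfFin h j : ℕ) ≤ t).card
      = (s.filter (· ≤ t)).card :=
  orderIso_filter_card s h (· ≤ t)

/-- there is a system of arrows from E(p₁,…,pₙ) to E(q₁,…,qₙ) iff qᵢ ≥ pᵢ
for all i. -/
theorem stmt_9 (k n : ℕ) (hn : 0 < n) (hnk : n ≤ k + 1)
    (p q : Fin n → ℕ)
    (hp : ∀ i j : Fin n, i ≤ j → p j ≤ p i) (hq : ∀ i j : Fin n, i ≤ j → q j ≤ q i)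
    (hp1 : ∀ i, p i ≤ k + 1 - n) (hq1 : ∀ i, q i ≤ k + 1 - n) :
    (∃ f : ℕ × ℕ → ℕ × ℕ,
        IsArrowSystem 1 (-1) (Epart k n p) f ∧ f '' Epart k n p = Epart k n q) ↔
      ∀ i, p i ≤ q i := by
  classical
  constructor
  · -- forward direction
    rintro ⟨f, ⟨harr, hinj, _⟩, himg⟩
    have hkey : ∀ y, ∃ x, y ∈ Aset k n q →
        x ∈ Aset k n p ∧ y ≤ x ∧ f (x, k - x) = (y, k - y) := by
      intro y
      by_cases hy : y ∈ Aset k n q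
      swap
      · exact ⟨0, fun h => absurd h hy⟩
      have hyk : y ≤ k := Aset_le hy
      have hmem : (y, k - y) ∈ Epart k n q := by
        rw [mem_Epart_iff hnk hq1]
        right
        exact ⟨by simp; omega, by simpa using hy⟩
      rw [← himg] at hmem
      obtain ⟨m, hmE, hfm⟩ := hmem
      obtain ⟨_, l, hl, hc1, hc2⟩ := harr m hmE
      rw [hfm] at hc1 hc2
      simp only at hc1 hc2
      have hcast : ((k - y : ℕ) : ℤ) = (k : ℤ) - y := by
        rw [Nat.cast_sub hyk]
      have hym : y ≤ m.1 ∧ m.1 + m.2 = k := by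
        rw [hcast] at hc2
        constructor <;> omega
      have hm1 : m.1 ∈ Aset k n p := by
        rcases (mem_Epart_iff hnk hp1 m).1 hmE with h | h
        · omega
        · exact h.2
      refine ⟨m.1, fun _ => ⟨hm1, hym.1, ?_⟩⟩
      have hmeq : (m.1, k - m.1) = m := by
        refine Prod.ext rfl ?_
        simp only
        omega
      rw [hmeq, hfm]
    choose ψ hψ using hkey
    have hcnt : ∀ t, ((Aset k n q).filter (fun y => t ≤ y)).card
        ≤ ((Aset k n p).filter (fun y => t ≤ y)).card := by
      intro t
      apply Finset.card_le_card_of_injOn ψ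
      · intro y hy
        rw [Finset.mem_coe, Finset.mem_filter] at hy ⊢
        obtain ⟨h1, h2, _⟩ := hψ y hy.1
        exact ⟨h1, by omega⟩
      · intro y hy y' hy' heq
        rw [Finset.coe_filter, Set.mem_setOf_eq] at hy hy'
        obtain ⟨_, _, h3⟩ := hψ y hy.1
        obtain ⟨_, _, h3'⟩ := hψ y' hy'.1
        rw [heq, h3'] at h3
        exact ((Prod.ext_iff.1 h3).1).symm
    have hXcnt : ∀ t, (Finset.univ.filter fun i => t ≤ xSeq n p i).card
        ≤ (Finset.univ.filter fun i => t ≤ xSeq n q i).card := by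
      intro t
      have h1 := Aset_filter_card (k := k) (p := p) hnk hp1 (fun y => t ≤ y)
      have h2 := Aset_filter_card (k := k) (p := q) hnk hq1 (fun y => t ≤ y)
      have e1 := Xset_filter_card (p := p) hp (fun y => t ≤ y)
      have e2 := Xset_filter_card (p := q) hq (fun y => t ≤ y)
      have := hcnt t
      omega
    have hge := nth_ge (xSeq n p) (xSeq n q) (xSeq_strictAnti hp) (xSeq_strictAnti hq) hXcnt
    intro i
    have h := hge i
    have hi : i.val < n := i.isLt
    unfold xSeq at h
    omega
  · -- backward direction
    intro hpq
    have hA := card_Aset (k := k) hnk hp hp1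
    have hB := card_Aset (k := k) hnk hq hq1
    set eA := (Aset k n p).orderIsoOfFin hA with heA
    set eB := (Aset k n q).orderIsoOfFin hB with heB
    set φ : ℕ → ℕ := fun x => if h : x ∈ Aset k n p then (eB (eA.symm ⟨x, h⟩) : ℕ) else x
      with hφ
    have hAcnt : ∀ t, ((Aset k n p).filter (· ≤ t)).card
        ≤ ((Aset k n q).filter (· ≤ t)).card := by
      intro t
      have hXc : (Finset.univ.filter fun i => xSeq n q i ≤ t).card
          ≤ (Finset.univ.filter fun i => xSeq n p i ≤ t).card := by
        apply Finset.card_le_card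
        apply Finset.monotone_filter_right
        intro i hi
        have h1 := hpq i
        have h2 : i.val < n := i.isLt
        unfold xSeq at hi ⊢
        omega
      have h1 := Aset_filter_card (k := k) (p := p) hnk hp1 (· ≤ t)
      have h2 := Aset_filter_card (k := k) (p := q) hnk hq1 (· ≤ t)
      have e1 := Xset_filter_card (p := p) hp (· ≤ t)
      have e2 := Xset_filter_card (p := q) hq (· ≤ t)
      omega
    have hnth : ∀ j, (eB j : ℕ) ≤ (eA j : ℕ) := by
      apply nth_le (fun j => (eA j : ℕ)) (fun j => (eB j : ℕ))
      · intro a b hab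
        exact Subtype.coe_lt_coe.2 (eA.strictMono hab)
      · intro a b hab
        exact Subtype.coe_lt_coe.2 (eB.strictMono hab)
      · intro t
        rw [heA, heB, orderIso_filter_card_le, orderIso_filter_card_le]
        exact hAcnt t
    have hφle : ∀ x ∈ Aset k n p, φ x ≤ x := by
      intro x hx
      rw [hφ]
      simp only [dif_pos hx]
      have h1 := hnth (eA.symm ⟨x, hx⟩)
      have h2 : ((eA (eA.symm ⟨x, hx⟩)) : ℕ) = x := by rw [eA.apply_symm_apply]
      omega
    have hφmem : ∀ x ∈ Aset k n p, φ x ∈ Aset k n q := by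
      intro x hx
      rw [hφ]
      simp only [dif_pos hx]
      exact (eB (eA.symm ⟨x, hx⟩)).2
    have hφinj : ∀ x ∈ Aset k n p, ∀ x' ∈ Aset k n p, φ x = φ x' → x = x' := by
      intro x hx x' hx' heq
      rw [hφ] at heq
      simp only [dif_pos hx, dif_pos hx'] at heq
      have := eA.symm.injective (eB.injective (Subtype.ext heq))
      exact congrArg Subtype.val this
    have hφsurj : ∀ y ∈ Aset k n q, ∃ x ∈ Aset k n p, φ x = y := by
      intro y hy
      have hx : ((eA (eB.symm ⟨y, hy⟩)) : ℕ) ∈ Aset k n p := (eA (eB.symm ⟨y, hy⟩)).2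
      refine ⟨_, hx, ?_⟩
      rw [hφ]
      simp only [dif_pos hx]
      have h1 : eA.symm ⟨((eA (eB.symm ⟨y, hy⟩)) : ℕ), hx⟩ = eB.symm ⟨y, hy⟩ := by
        apply eA.injective
        rw [eA.apply_symm_apply]
      rw [h1, eB.apply_symm_apply]
    refine ⟨fun m => if m.1 + m.2 = k then (φ m.1, k - φ m.1) else m, ⟨?_, ?_, ?_⟩, ?_⟩
    · -- arrows
      intro m hm
      by_cases hdeg : m.1 + m.2 = k
      · have hm1 : m.1 ∈ Aset k n p := by
          rcases (mem_Epart_iff hnk hp1 m).1 hm with h | h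
          · omega
          · exact h.2
        have hle := hφle m.1 hm1
        have hk1 : m.1 ≤ k := Aset_le hm1
        refine ⟨hm, (φ m.1 : ℤ) - m.1, by omega, ?_, ?_⟩
        · simp only [hdeg, if_pos]
          ring
        · simp only [hdeg, if_pos]
          have : φ m.1 ≤ k := by omega
          push_cast [Nat.cast_sub this]
          ring_nf
          omega
      · exact ⟨hm, 0, le_refl 0, by simp [hdeg], by simp [hdeg]⟩
    · -- injectivity
      intro m hm m' hm' hne heq
      simp only at heq
      by_cases hdeg : m.1 + m.2 = k <;> by_cases hdeg' : m'.1 + m'.2 = k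
      · rw [if_pos hdeg, if_pos hdeg'] at heq
        have hm1 : m.1 ∈ Aset k n p := by
          rcases (mem_Epart_iff hnk hp1 m).1 hm with h | h
          · omega
          · exact h.2
        have hm1' : m'.1 ∈ Aset k n p := by
          rcases (mem_Epart_iff hnk hp1 m').1 hm' with h | h
          · omega
          · exact h.2
        have h1 : m.1 = m'.1 := hφinj _ hm1 _ hm1' (Prod.ext_iff.1 heq).1
        exact hne (Prod.ext h1 (by omega))
      · rw [if_pos hdeg, if_neg hdeg'] at heq
        have hm1 : m.1 ∈ Aset k n p := by
          rcases (mem_Epart_iff hnk hp1 m).1 hm with h | h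
          · omega
          · exact h.2
        have hφk : φ m.1 ≤ k := Aset_le (hφmem m.1 hm1)
        have : m'.1 + m'.2 = k := by
          rw [← heq]
          simp only
          omega
        exact hdeg' this
      · rw [if_neg hdeg, if_pos hdeg'] at heq
        have hm1' : m'.1 ∈ Aset k n p := by
          rcases (mem_Epart_iff hnk hp1 m').1 hm' with h | h
          · omega
          · exact h.2
        have hφk : φ m'.1 ≤ k := Aset_le (hφmem m'.1 hm1')
        have : m.1 + m.2 = k := by
          rw [heq]
          simp only
          omega
        exact hdeg this
      · rw [if_neg hdeg, if_neg hdeg'] at heq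
        exact hne heq
    · -- divisor condition
      intro m hm Q' h1 h2
      simp only at h1 h2
      by_cases hdeg : m.1 + m.2 = k
      · rw [if_pos hdeg] at h1 h2
        have hm1 : m.1 ∈ Aset k n p := by
          rcases (mem_Epart_iff hnk hp1 m).1 hm with h | h
          · omega
          · exact h.2
        have hφk : φ m.1 ≤ k := Aset_le (hφmem m.1 hm1)
        by_cases hQ : Q'.1 + Q'.2 = k
        · have hQeq : Q' = (φ m.1, k - φ m.1) := by
            refine Prod.ext ?_ ?_ <;> simp only <;> omega
          refine ⟨m, hm, ?_, ?_⟩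
          · simp only [if_pos hdeg, hQeq]
          · simp only [Shorter, if_pos hdeg, hQeq]
            exact le_refl _
        · refine ⟨Q', ?_, ?_, ?_⟩
          · rw [mem_Epart_iff hnk hp1]
            left
            omega
          · simp only [if_neg hQ]
          · simp only [Shorter]
            simp
      · rw [if_neg hdeg] at h1 h2
        have hmk : m.1 + m.2 ≤ k := by
          rcases (mem_Epart_iff hnk hp1 m).1 hm with h | h
          · omega
          · omega
        have hQ : Q'.1 + Q'.2 ≠ k := by omega
        refine ⟨Q', ?_, ?_, ?_⟩
        · rw [mem_Epart_iff hnk hp1]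
          left
          omega
        · simp only [if_neg hQ]
        · simp only [Shorter]
          simp
    · -- image equality
      ext m'
      simp only [Set.mem_image]
      constructor
      · rintro ⟨m, hm, rfl⟩
        by_cases hdeg : m.1 + m.2 = k
        · have hm1 : m.1 ∈ Aset k n p := by
            rcases (mem_Epart_iff hnk hp1 m).1 hm with h | h
            · omega
            · exact h.2
          have hφk : φ m.1 ≤ k := Aset_le (hφmem m.1 hm1)
          simp only [if_pos hdeg]
          rw [mem_Epart_iff hnk hq1]
          right
          exact ⟨by simp only; omega, hφmem m.1 hm1⟩
        · simp only [if_neg hdeg]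
          rw [mem_Epart_iff hnk hq1]
          left
          rcases (mem_Epart_iff hnk hp1 m).1 hm with h | h
          · exact h
          · omega
      · intro hm'
        by_cases hdeg : m'.1 + m'.2 = k
        · have hm1 : m'.1 ∈ Aset k n q := by
            rcases (mem_Epart_iff hnk hq1 m').1 hm' with h | h
            · omega
            · exact h.2
          obtain ⟨x, hx, hφx⟩ := hφsurj m'.1 hm1
          have hxk : x ≤ k := Aset_le hx
          refine ⟨(x, k - x), ?_, ?_⟩
          · rw [mem_Epart_iff hnk hp1]
            right
            exact ⟨by simp only; omega, by simpa using hx⟩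
          · have hd : x + (k - x) = k := by omega
            simp only [hd, if_pos]
            rw [hφx]
            refine Prod.ext rfl ?_
            simp only
            omega
        · refine ⟨m', ?_, by simp [hdeg]⟩
          rw [mem_Epart_iff hnk hp1]
          left
          rcases (mem_Epart_iff hnk hq1 m').1 hm' with h | h
          · exact h
          · omega
end

section
/- Let Y be defined by (x^M, y^N) ⊆ k[x,y] and let Z ⊆ Y be a zero-dimensional subscheme with ideal I ⊇ (x^M,y^N). Then the double link returns Z: ((x^M,y^N) : ((x^M,y^N) : I)) = I. -/
open MvPolynomial

namespace Stmt11Aux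

noncomputable section

variable (k : Type*) [Field k] (M N : ℕ)

abbrev P := MvPolynomial (Fin 2) k

def Jid : Ideal (P k) := Ideal.span {(X 0 : P k) ^ M, (X 1 : P k) ^ N}

def m0 : Fin 2 →₀ ℕ := Finsupp.single 0 (M - 1) + Finsupp.single 1 (N - 1)

variable {k M N}

lemma m0_apply0 : m0 M N 0 = M - 1 := by simp [m0]
lemma m0_apply1 : m0 M N 1 = N - 1 := by simp [m0]

lemma coeff_m0_of_mem (hM : 0 < M) (hN : 0 < N) {f : P k} (hf : f ∈ Jid k M N) :
    coeff (m0 M N) f = 0 := by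
  rw [Jid, Ideal.mem_span_pair] at hf
  obtain ⟨p, q, rfl⟩ := hf
  rw [coeff_add, X_pow_eq_monomial, X_pow_eq_monomial, coeff_mul_monomial',
    coeff_mul_monomial']
  rw [if_neg, if_neg, add_zero]
  · rw [Finsupp.single_le_iff, m0_apply1]; omega
  · rw [Finsupp.single_le_iff, m0_apply0]; omega

lemma exists_small_of_not_mem {f : P k} (hf : f ∉ Jid k M N) :
    ∃ m ∈ f.support, m 0 < M ∧ m 1 < N := by
  by_contra h
  push_neg at h
  apply hf
  rw [← support_sum_monomial_coeff f]
  refine Ideal.sum_mem _ fun m hm => ?_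
  rcases lt_or_ge (m 0) M with h0 | h0
  · -- then N ≤ m 1
    have h1 : N ≤ m 1 := h m hm h0
    have : (monomial m (coeff m f) : P k)
        = monomial (m - Finsupp.single 1 N) (coeff m f) * (X 1) ^ N := by
      rw [X_pow_eq_monomial, monomial_mul, mul_one, tsub_add_cancel_of_le]
      rwa [Finsupp.single_le_iff]
    rw [this]
    exact Ideal.mul_mem_left _ _ (Ideal.subset_span (by simp))
  · have : (monomial m (coeff m f) : P k)
        = monomial (m - Finsupp.single 0 M) (coeff m f) * (X 0) ^ M := by
      rw [X_pow_eq_monomial, monomial_mul, mul_one, tsub_add_cancel_of_le]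
      rwa [Finsupp.single_le_iff]
    rw [this]
    exact Ideal.mul_mem_left _ _ (Ideal.subset_span (by simp))

lemma mem_J_iff (hM : 0 < M) (hN : 0 < N) {f : P k} :
    f ∈ Jid k M N ↔ ∀ g : P k, coeff (m0 M N) (f * g) = 0 := by
  constructor
  · intro hf g
    exact coeff_m0_of_mem hM hN (Ideal.mul_mem_right _ _ hf)
  · intro h
    by_contra hf
    obtain ⟨m, hm, hm0, hm1⟩ := exists_small_of_not_mem hf
    have hle : m ≤ m0 M N := by
      intro i
      fin_cases i
      · show m 0 ≤ m0 M N 0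
        rw [m0_apply0]; omega
      · show m 1 ≤ m0 M N 1
        rw [m0_apply1]; omega
    have := h (monomial (m0 M N - m) 1)
    rw [coeff_mul_monomial', if_pos tsub_le_self, mul_one,
      tsub_tsub_cancel_of_le hle] at this
    exact (MvPolynomial.mem_support_iff.1 hm) this

lemma mem_colon_iff (hM : 0 < M) (hN : 0 < N) {I : Ideal (P k)} {f : P k} :
    f ∈ Submodule.colon (Jid k M N) I ↔ ∀ g ∈ I, coeff (m0 M N) (f * g) = 0 := by
  rw [Submodule.mem_colon]
  constructor
  · intro h g hg
    exact coeff_m0_of_mem hM hN (by simpa [smul_eq_mul, mul_comm] using h g hg)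
  · intro h g hg
    rw [smul_eq_mul, mem_J_iff hM hN]
    intro p
    rw [mul_assoc]
    exact h _ (I.mul_mem_right p hg)

/-! ### The quotient space and bilinear form -/

variable (k M N)

def J' : Submodule k (P k) := (Jid k M N).restrictScalars k

abbrev V := P k ⧸ J' k M N

def B0 : P k →ₗ[k] P k →ₗ[k] k :=
  LinearMap.mk₂ k (fun f g => coeff (m0 M N) (f * g))
    (fun f f' g => by rw [add_mul, coeff_add])
    (fun c f g => by rw [smul_mul_assoc, coeff_smul, smul_eq_mul])
    (fun f g g' => by rw [mul_add, coeff_add])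
    (fun c f g => by rw [mul_smul_comm, coeff_smul, smul_eq_mul])

variable {k M N}

lemma B0_ker_right (hM : 0 < M) (hN : 0 < N) (f : P k) :
    J' k M N ≤ LinearMap.ker (B0 k M N f) := by
  intro g hg
  have : g ∈ Jid k M N := hg
  simp only [LinearMap.mem_ker, B0, LinearMap.mk₂_apply]
  rw [mul_comm]
  exact coeff_m0_of_mem hM hN (Ideal.mul_mem_right _ _ this)

variable (k M N) in
def B1 (hM : 0 < M) (hN : 0 < N) : P k →ₗ[k] V k M N →ₗ[k] k where
  toFun f := (J' k M N).liftQ (B0 k M N f) (B0_ker_right hM hN f)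
  map_add' f f' := by
    apply LinearMap.ext
    intro x
    obtain ⟨g, rfl⟩ := Submodule.mkQ_surjective _ x
    simp [Submodule.liftQ_apply]
  map_smul' c f := by
    apply LinearMap.ext
    intro x
    obtain ⟨g, rfl⟩ := Submodule.mkQ_surjective _ x
    simp [Submodule.liftQ_apply]

variable (k M N) in
def Bq (hM : 0 < M) (hN : 0 < N) : LinearMap.BilinForm k (V k M N) :=
  (J' k M N).liftQ (B1 k M N hM hN) (by
    intro f hf
    have hfJ : f ∈ Jid k M N := hf
    apply LinearMap.ext
    intro x
    obtain ⟨g, rfl⟩ := Submodule.mkQ_surjective _ x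
    simp only [B1, LinearMap.coe_mk, AddHom.coe_mk, LinearMap.mem_ker,
      Submodule.liftQ_apply, LinearMap.zero_apply]
    simpa [B0] using coeff_m0_of_mem hM hN (Ideal.mul_mem_right g _ hfJ))

lemma Bq_apply (hM : 0 < M) (hN : 0 < N) (f g : P k) :
    Bq k M N hM hN ((J' k M N).mkQ f) ((J' k M N).mkQ g) = coeff (m0 M N) (f * g) := by
  simp [Bq, B1, B0, Submodule.liftQ_apply]

lemma Bq_symm (hM : 0 < M) (hN : 0 < N) (x y : V k M N) :
    Bq k M N hM hN x y = Bq k M N hM hN y x := by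
  obtain ⟨f, rfl⟩ := Submodule.mkQ_surjective _ x
  obtain ⟨g, rfl⟩ := Submodule.mkQ_surjective _ y
  rw [Bq_apply, Bq_apply, mul_comm]

lemma Bq_refl (hM : 0 < M) (hN : 0 < N) : (Bq k M N hM hN).IsRefl := by
  intro x y h
  rw [Bq_symm]; exact h

lemma Bq_nondegenerate (hM : 0 < M) (hN : 0 < N) : (Bq k M N hM hN).Nondegenerate := by
  refine (LinearMap.IsRefl.nondegenerate_iff_separatingLeft
    (show LinearMap.IsRefl (Bq k M N hM hN) from Bq_refl hM hN)).2 ?_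
  intro x hx
  obtain ⟨f, rfl⟩ := Submodule.mkQ_surjective _ x
  have hf : f ∈ Jid k M N := by
    rw [mem_J_iff hM hN]
    intro g
    exact (Bq_apply hM hN f g).symm.trans (hx ((J' k M N).mkQ g))
  exact (Submodule.Quotient.mk_eq_zero (J' k M N)).2 hf

lemma finiteDimensional_V (hM : 0 < M) (hN : 0 < N) : FiniteDimensional k (V k M N) := by
  set S : Set (V k M N) := Set.range (fun p : Fin M × Fin N =>
    (J' k M N).mkQ (monomial (Finsupp.single 0 (p.1 : ℕ) + Finsupp.single 1 (p.2 : ℕ)) (1 : k)))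
  have hfin : S.Finite := Set.finite_range _
  have hspan : Submodule.span k S = ⊤ := by
    rw [eq_top_iff]
    intro x _
    obtain ⟨f, rfl⟩ := Submodule.mkQ_surjective _ x
    rw [← support_sum_monomial_coeff f, map_sum]
    refine Submodule.sum_mem _ fun m _ => ?_
    have hmono : (monomial m (coeff m f) : P k) = coeff m f • monomial m (1 : k) := by
      rw [smul_monomial, smul_eq_mul, mul_one]
    rw [hmono, map_smul]
    refine Submodule.smul_mem _ _ ?_
    rcases lt_or_ge (m 0) M with h0 | h0
    · rcases lt_or_ge (m 1) N with h1 | h1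
      · have hm' : Finsupp.single (0 : Fin 2) (m 0) + Finsupp.single 1 (m 1) = m := by
          ext i
          fin_cases i <;> simp [Finsupp.single_apply]
        refine Submodule.subset_span ⟨(⟨m 0, h0⟩, ⟨m 1, h1⟩), ?_⟩
        simp [hm']
      · have : (monomial m (1 : k)) ∈ Jid k M N := by
          have : (monomial m (1 : k) : P k)
              = monomial (m - Finsupp.single 1 N) 1 * (X 1) ^ N := by
            rw [X_pow_eq_monomial, monomial_mul, mul_one, tsub_add_cancel_of_le]
            rwa [Finsupp.single_le_iff]
          rw [this]
          exact Ideal.mul_mem_left _ _ (Ideal.subset_span (by simp))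
        have hz : (J' k M N).mkQ (monomial m (1 : k)) = 0 := by
          exact (Submodule.Quotient.mk_eq_zero (J' k M N)).2 this
        rw [hz]; exact Submodule.zero_mem _
    · have : (monomial m (1 : k)) ∈ Jid k M N := by
        have : (monomial m (1 : k) : P k)
            = monomial (m - Finsupp.single 0 M) 1 * (X 0) ^ M := by
          rw [X_pow_eq_monomial, monomial_mul, mul_one, tsub_add_cancel_of_le]
          rwa [Finsupp.single_le_iff]
        rw [this]
        exact Ideal.mul_mem_left _ _ (Ideal.subset_span (by simp))
      have hz : (J' k M N).mkQ (monomial m (1 : k)) = 0 := by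
        exact (Submodule.Quotient.mk_eq_zero (J' k M N)).2 this
      rw [hz]; exact Submodule.zero_mem _
  exact ⟨⟨hfin.toFinset, by rwa [Set.Finite.coe_toFinset]⟩⟩

/-- Membership in the colon ideal corresponds to orthogonality. -/
lemma colon_iff_orthogonal (hM : 0 < M) (hN : 0 < N) (I : Ideal (P k)) (f : P k) :
    f ∈ Submodule.colon (Jid k M N) I ↔
      (J' k M N).mkQ f ∈ (Bq k M N hM hN).orthogonal
        (Submodule.map (J' k M N).mkQ (I.restrictScalars k)) := by
  rw [mem_colon_iff hM hN, LinearMap.BilinForm.mem_orthogonal_iff]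
  constructor
  · rintro h y ⟨g, hg, rfl⟩
    have := h g hg
    rw [Bq_apply, mul_comm]
    exact this
  · intro h g hg
    have := h ((J' k M N).mkQ g) ⟨g, hg, rfl⟩
    rw [Bq_apply, mul_comm] at this
    exact this

lemma map_colon (hM : 0 < M) (hN : 0 < N) (I : Ideal (P k)) :
    Submodule.map (J' k M N).mkQ ((Submodule.colon (Jid k M N) I).restrictScalars k)
      = (Bq k M N hM hN).orthogonal
          (Submodule.map (J' k M N).mkQ (I.restrictScalars k)) := by
  apply le_antisymm
  · rintro y ⟨f, hf, rfl⟩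
    exact (colon_iff_orthogonal hM hN I f).1 hf
  · intro y hy
    obtain ⟨f, rfl⟩ := Submodule.mkQ_surjective _ y
    exact ⟨f, (colon_iff_orthogonal hM hN I f).2 hy, rfl⟩

theorem double_colon (hM : 0 < M) (hN : 0 < N) (I : Ideal (P k))
    (hJI : Jid k M N ≤ I) :
    Submodule.colon (Jid k M N) (Submodule.colon (Jid k M N) I) = I := by
  haveI := finiteDimensional_V (k := k) hM hN
  apply le_antisymm
  · intro f hf
    have h1 := (colon_iff_orthogonal hM hN (Submodule.colon (Jid k M N) I) f).1 hf
    rw [show (Submodule.colon (Jid k M N) I).restrictScalars k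
        = ((Submodule.colon (Jid k M N) I : Ideal (P k)).restrictScalars k) from rfl] at h1
    rw [map_colon hM hN I] at h1
    rw [LinearMap.BilinForm.orthogonal_orthogonal (Bq_nondegenerate hM hN)
      (Bq_refl hM hN)] at h1
    obtain ⟨g, hg, hfg⟩ := h1
    rw [Submodule.mkQ_apply, Submodule.mkQ_apply, Submodule.Quotient.eq] at hfg
    have hfgJ : f - g ∈ Jid k M N := by
      have := neg_mem hfg
      simpa [J'] using this
    have : f = g + (f - g) := by ring
    rw [this]
    exact I.add_mem hg (hJI hfgJ)
  · intro f hf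
    rw [Submodule.mem_colon]
    intro p hp
    rw [SetLike.mem_coe, Submodule.mem_colon] at hp
    rw [smul_eq_mul, mul_comm, ← smul_eq_mul]
    exact hp f hf

end

end Stmt11Aux

/-- linkage in the complete intersection (x^M, y^N) is an involution:
((x^M,y^N) : ((x^M,y^N) : I)) = I for every ideal I containing (x^M,y^N). -/
theorem stmt_11 (k : Type*) [Field k] (M N : ℕ) (hM : 0 < M) (hN : 0 < N)
    (I : Ideal (MvPolynomial (Fin 2) k))
    (hJI : Ideal.span {(X 0 : MvPolynomial (Fin 2) k) ^ M, (X 1 : MvPolynomial (Fin 2) k) ^ N} ≤ I) :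
    Submodule.colon
        (Ideal.span {(X 0 : MvPolynomial (Fin 2) k) ^ M, (X 1 : MvPolynomial (Fin 2) k) ^ N})
        (Submodule.colon
          (Ideal.span {(X 0 : MvPolynomial (Fin 2) k) ^ M, (X 1 : MvPolynomial (Fin 2) k) ^ N}) I) =
      I := by
  exact Stmt11Aux.double_colon hM hN I hJI
end

section
/- Let E be a staircase with complement E^c, and let S^c be a system of arrows on E^c. If p₀ > p₁ > ⋯ > p_s are the monomials of a fixed d-degree s listed in decreasing order, and p₀, p₁, …, p_l all lie outside a box B_{M×N} containing E and the staircase F (where S^c(E^c) = F^c), then S^c contains the arrows (p₀,p₀), (p₁,p₁), …, (p_l,p_l). -/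
open Set

-- helper: if the arrow at g has zero x-displacement, it is trivial
lemma arrow_fix (a b : ℤ) (ha : 0 < a) (E : Set (ℕ × ℕ))
    (f : ℕ × ℕ → ℕ × ℕ) (hf : IsCArrowSystem a b E f)
    (g : ℕ × ℕ) (hg : g ∉ E) (hx : ((f g).1 : ℤ) = (g.1 : ℤ)) : f g = g := by
  obtain ⟨-, l, hl, h1, h2⟩ := hf.1 g hg
  have hl0 : l = 0 := by nlinarith
  subst hl0
  have e1 : (f g).1 = g.1 := by exact_mod_cast hx
  have e2 : (f g).2 = g.2 := by
    have : ((f g).2 : ℤ) = g.2 := by linarith [h2]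
    exact_mod_cast this
  exact Prod.ext e1 e2

-- key step: propagate fixed points upward (coordinatewise)
lemma key_step (a b : ℤ) (ha : 0 < a) (E : Set (ℕ × ℕ))
    (f : ℕ × ℕ → ℕ × ℕ) (hf : IsCArrowSystem a b E f)
    (p' : ℕ × ℕ) (hp' : p' ∉ E) (hfp' : f p' = p') (m : ℕ × ℕ) :
    f (p' + m) = p' + m := by
  obtain ⟨g, hg, hfg, hsh⟩ := hf.2.2 p' hp' m
  rw [hfp'] at hfg hsh
  have hsh' : |((p' + m).1 : ℤ) - g.1| ≤ 0 := by
    simpa [Shorter] using hsh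
  have hx : ((p' + m).1 : ℤ) = (g.1 : ℤ) := by
    have := abs_nonneg (((p' + m).1 : ℤ) - g.1)
    have h0 : |((p' + m).1 : ℤ) - g.1| = 0 := le_antisymm hsh' this
    have := abs_eq_zero.mp h0
    linarith
  have := arrow_fix a b ha E f hf g hg (by rw [hfg]; exact hx)
  rw [this] at hfg
  rw [← hfg, this]

-- direct argument at boundary points
lemma direct_fix (a b : ℤ) (ha : 0 < a) (M N : ℕ) (E F : Set (ℕ × ℕ))
    (f : ℕ × ℕ → ℕ × ℕ) (hf : IsCArrowSystem a b E f)
    (hSF : f '' Eᶜ = Fᶜ) (hFB : F ⊆ Box M N)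
    (p : ℕ × ℕ) (hpB : p ∉ Box M N)
    (h0 : p.1 = 0 ∨ (0 < b ∧ p.2 = 0)) : f p = p := by
  have hpF : p ∈ Fᶜ := fun h => hpB (hFB h)
  rw [← hSF] at hpF
  obtain ⟨g, hg, hfg⟩ := hpF
  obtain ⟨-, l, hl, h1, h2⟩ := hf.1 g hg
  rw [hfg] at h1 h2
  have hl0 : l = 0 := by
    rcases h0 with h0 | ⟨hb, h0⟩
    · have hg1 : (0:ℤ) ≤ (g.1 : ℤ) := Int.natCast_nonneg _
      have : (p.1 : ℤ) = 0 := by exact_mod_cast h0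
      nlinarith
    · have hg2 : (0:ℤ) ≤ (g.2 : ℤ) := Int.natCast_nonneg _
      have : (p.2 : ℤ) = 0 := by exact_mod_cast h0
      nlinarith
  subst hl0
  have e1 : g.1 = p.1 := by
    have : (g.1 : ℤ) = p.1 := by linarith
    exact_mod_cast this
  have e2 : g.2 = p.2 := by
    have : (g.2 : ℤ) = p.2 := by linarith
    exact_mod_cast this
  have : g = p := Prod.ext e1 e2
  rwa [this] at hfg

-- case b > 0 : every point outside the box is fixed
lemma bpos_fix (a b : ℤ) (ha : 0 < a) (hb : 0 < b) (M N : ℕ) (E F : Set (ℕ × ℕ))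
    (hEB : E ⊆ Box M N) (f : ℕ × ℕ → ℕ × ℕ) (hf : IsCArrowSystem a b E f)
    (hSF : f '' Eᶜ = Fᶜ) (hFB : F ⊆ Box M N) :
    ∀ n : ℕ, ∀ p : ℕ × ℕ, p.1 + p.2 ≤ n → p ∉ Box M N → f p = p := by
  intro n
  induction n with
  | zero =>
    intro p hpn hpB
    exact direct_fix a b ha M N E F f hf hSF hFB p hpB (Or.inl (by omega))
  | succ n ih =>
    intro p hpn hpB
    by_cases h1 : 0 < p.1 ∧ (p.1 - 1, p.2) ∉ Box M N
    · have hfix := ih (p.1 - 1, p.2) (by simp; omega) h1.2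
      have hp'E : (p.1 - 1, p.2) ∉ E := fun h => h1.2 (hEB h)
      have key := key_step a b ha E f hf _ hp'E hfix (1, 0)
      have hpe : ((p.1 - 1 : ℕ), p.2) + (1, 0) = p := by
        have := h1.1
        ext <;> simp <;> omega
      rwa [hpe] at key
    by_cases h2 : 0 < p.2 ∧ (p.1, p.2 - 1) ∉ Box M N
    · have hfix := ih (p.1, p.2 - 1) (by simp; omega) h2.2
      have hp'E : (p.1, p.2 - 1) ∉ E := fun h => h2.2 (hEB h)
      have key := key_step a b ha E f hf _ hp'E hfix (0, 1)
      have hpe : (p.1, (p.2 - 1 : ℕ)) + (0, 1) = p := by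
        have := h2.1
        ext <;> simp <;> omega
      rwa [hpe] at key
    · have h0 : p.1 = 0 ∨ p.2 = 0 := by
        by_contra hcon
        push_neg at hcon
        have hx : 0 < p.1 := Nat.pos_of_ne_zero hcon.1
        have hy : 0 < p.2 := Nat.pos_of_ne_zero hcon.2
        have b1 : (p.1 - 1, p.2) ∈ Box M N := by
          by_contra hB; exact h1 ⟨hx, hB⟩
        have b2 : (p.1, p.2 - 1) ∈ Box M N := by
          by_contra hB; exact h2 ⟨hy, hB⟩
        exact hpB ⟨b2.1, b1.2⟩
      rcases h0 with h0 | h0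
      · exact direct_fix a b ha M N E F f hf hSF hFB p hpB (Or.inl h0)
      · exact direct_fix a b ha M N E F f hf hSF hFB p hpB (Or.inr ⟨hb, h0⟩)

-- case b < 0 : downward induction on the x-coordinate
lemma bneg_fix (a b : ℤ) (ha : 0 < a) (hb : b < 0) (M N : ℕ) (E F : Set (ℕ × ℕ))
    (f : ℕ × ℕ → ℕ × ℕ) (hf : IsCArrowSystem a b E f)
    (hSF : f '' Eᶜ = Fᶜ) (hFB : F ⊆ Box M N) :
    ∀ n : ℕ, ∀ p : ℕ × ℕ, p.1 ≤ n → p ∉ Box M N →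
      (∀ q : ℕ × ℕ, dDeg a b q = dDeg a b p → mLt a b p q → q ∉ Box M N) →
      f p = p := by
  intro n
  induction n with
  | zero =>
    intro p hpn hpB _
    exact direct_fix a b ha M N E F f hf hSF hFB p hpB (Or.inl (by omega))
  | succ n ih =>
    intro p hpn hpB hyp
    have hpF : p ∈ Fᶜ := fun h => hpB (hFB h)
    rw [← hSF] at hpF
    obtain ⟨g, hg, hfg⟩ := hpF
    obtain ⟨-, l, hl, h1, h2⟩ := hf.1 g hg
    rw [hfg] at h1 h2
    rcases eq_or_lt_of_le hl with hl0 | hl0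
    · -- l = 0 : g = p
      have e1 : g.1 = p.1 := by
        have : (g.1 : ℤ) = p.1 := by nlinarith
        exact_mod_cast this
      have e2 : g.2 = p.2 := by
        have : (g.2 : ℤ) = p.2 := by nlinarith
        exact_mod_cast this
      have : g = p := Prod.ext e1 e2
      rwa [this] at hfg
    · -- l > 0 : g is larger in the monomial order, smaller x; contradiction by IH
      exfalso
      have hdeg : dDeg a b g = dDeg a b p := by
        unfold dDeg; linear_combination b * h1 - a * h2
      have hy : p.2 < g.2 := by
        have : (p.2 : ℤ) < g.2 := by nlinarith
        exact_mod_cast this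
      have hgB : g ∉ Box M N := hyp g hdeg (Or.inr ⟨hdeg.symm, hy⟩)
      have hgn : g.1 ≤ n := by
        have hx : (g.1 : ℤ) < p.1 := by nlinarith
        have : g.1 < p.1 := by exact_mod_cast hx
        omega
      have hypg : ∀ q : ℕ × ℕ, dDeg a b q = dDeg a b g → mLt a b g q → q ∉ Box M N := by
        intro q hq hlt
        rcases hlt with hlt | ⟨he, hy2⟩
        · rw [hq] at hlt; exact absurd hlt (lt_irrefl _)
        · exact hyp q (hq.trans hdeg) (Or.inr ⟨(hq.trans hdeg).symm, lt_trans hy hy2⟩)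
      have := ih g hgn hgB hypg
      rw [this] at hfg
      rw [hfg] at hy
      exact lt_irrefl _ hy

/-- let S^c be a system of arrows on E^c with S^c(E^c) = F^c, where both E
and F are contained in B_{M×N}. If p lies outside the box and every monomial of the same
degree larger than p also lies outside the box (i.e. p belongs to the top segment
p₀ > p₁ > ⋯ > p_l of monomials of its degree, all outside the box), then the arrow of S^c
with origin p is (p,p). -/
theorem stmt_19 (a b : ℤ) (ha : 0 < a) (hb : b ≠ 0) (hab : IsCoprime a b)
    (M N : ℕ) (E F : Set (ℕ × ℕ)) (hE : IsStaircase E) (hEB : E ⊆ Box M N)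
    (f : ℕ × ℕ → ℕ × ℕ) (hf : IsCArrowSystem a b E f)
    (hF : IsStaircase F) (hSF : f '' Eᶜ = Fᶜ) (hFB : F ⊆ Box M N) :
    ∀ p : ℕ × ℕ, p ∉ Box M N →
      (∀ q : ℕ × ℕ, dDeg a b q = dDeg a b p → mLt a b p q → q ∉ Box M N) →
      f p = p := by
  intro p hpB hyp
  rcases lt_or_gt_of_ne hb with hbneg | hbpos
  · exact bneg_fix a b ha hbneg M N E F f hf hSF hFB p.1 p le_rfl hpB hyp
  · exact bpos_fix a b ha hbpos M N E F hEB f hf hSF hFB (p.1 + p.2) p le_rfl hpB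
end
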